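/- arXiv:1310.4471 — 6 statements merged into one kernel-verified Lean document; each statement's English description precedes it below -/
import Mathlib

section
/- Let H : ℝ → ℂ^{K×K} be such that H(t) is a real symmetric matrix for all t. Then H is a positive definite matrix-valued function if and only if for every x ∈ ℝ^K the real-valued function t ↦ x^⊤ H(t) x is a positive definite function. -/
/-
For ξ = x + i y with x, y real, the symmetry of H(t) gives ξ^* H(t) ξ = xᵀ H(t) x + yᵀ H(t) y, so
every scalar function t ↦ ξ^* H(t) ξ is positive definite. To reach the block sum
∑ z_p^* H(t_p - t_q) z_q, test these functions at the points τ(s) = ∑_a s_a t_a, s in the cube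
{0, …, m-1}^N, with coefficients ψ(s) and vector ξ_ψ = ∑_q ψ(e_q) z_q, where ψ runs over the
characters of (ℤ/(m+1))^N. Averaging over ψ keeps exactly the terms with s - r = e_p - e_q, for
which τ(s) - τ(r) = t_p - t_q; the term (p, q) then occurs once for each such pair (s, r), that is
m^N (1 + o(1)) times, and m → ∞ gives the claim. The converse is the case z_i = c̄_i x.
-/

open Matrix BigOperators
open scoped ComplexOrder

/-- `H : ℝ → ℂ^{K×K}` is a positive definite matrix-valued function. -/
def IsPosDefMatrixFun {K : ℕ} (H : ℝ → Matrix (Fin K) (Fin K) ℂ) : Prop :=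
  ∀ (N : ℕ) (t : Fin N → ℝ) (z : Fin N → (Fin K → ℂ)),
    0 ≤ ∑ i, ∑ j, star (z i) ⬝ᵥ (H (t i - t j)) *ᵥ (z j)
/-- A real-valued function `f : ℝ → ℝ` is positive definite. -/
def IsPosDefFun (f : ℝ → ℝ) : Prop :=
  ∀ (N : ℕ) (t : Fin N → ℝ) (c : Fin N → ℂ),
    0 ≤ ∑ i, ∑ j, c i * (starRingEnd ℂ) (c j) * (f (t i - t j) : ℂ)

open Finset Filter Topology

universe u

lemma Finset.sum_sum_sum_sum_comm {α β γ δ M : Type*} [AddCommMonoid M] (s : Finset α)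
    (t : Finset β) (u : Finset γ) (v : Finset δ) (f : α → β → γ → δ → M) :
    ∑ a ∈ s, ∑ b ∈ t, ∑ c ∈ u, ∑ d ∈ v, f a b c d =
      ∑ c ∈ u, ∑ d ∈ v, ∑ a ∈ s, ∑ b ∈ t, f a b c d := by
  simp only [← sum_product' s t, ← sum_product' u v]
  exact sum_comm

lemma Finset.sum_sum_ite_sub_sub_eq_zero {V M : Type*} [AddCommGroup V] [DecidableEq V]
    [AddCommMonoid M] (C : Finset V) (d : V) (f : V → V → M) :
    ∑ s ∈ C, ∑ r ∈ C, (if s - r - d = 0 then f s r else 0) =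
      ∑ r ∈ C with r + d ∈ C, f (r + d) r := by
  rw [sum_comm, sum_filter]
  refine sum_congr rfl fun r _ => ?_
  simp_rw [sub_sub, sub_eq_zero, add_comm r d]
  exact sum_ite_eq' C (d + r) (f · r)

lemma Matrix.star_sum_smul_dotProduct_mulVec_sum_smul {n ι : Type*} [Fintype n] [Fintype ι]
    (M : Matrix n n ℂ) (a : ι → ℂ) (z : ι → n → ℂ) :
    star (∑ p, a p • z p) ⬝ᵥ M *ᵥ (∑ q, a q • z q) =
      ∑ p, ∑ q, star (a p) * a q * (star (z p) ⬝ᵥ M *ᵥ z q) := by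
  simp only [star_sum, star_smul, mulVec_sum, mulVec_smul, dotProduct_sum, sum_dotProduct,
    dotProduct_smul, smul_dotProduct, smul_eq_mul, mul_sum]
  rw [sum_comm]
  exact sum_congr rfl fun _ _ => sum_congr rfl fun _ _ => by ring

lemma Matrix.star_ofReal_dotProduct_mulVec_ofReal {n : Type*} [Fintype n] {M : Matrix n n ℂ}
    (hreal : ∀ i j, (M i j).im = 0) (x : n → ℝ) :
    star (fun k => (x k : ℂ)) ⬝ᵥ M *ᵥ (fun k => (x k : ℂ)) =
      ((∑ i, ∑ j, x i * (M i j).re * x j : ℝ) : ℂ) := by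
  have hM : ∀ i j, M i j = ((M i j).re : ℂ) := fun i j => Complex.ext rfl (hreal i j)
  simp only [dotProduct, mulVec, Pi.star_apply, Complex.star_def, Complex.conj_ofReal, mul_sum]
  push_cast
  exact sum_congr rfl fun i _ => sum_congr rfl fun j _ => by rw [← hM]; ring

lemma Matrix.star_dotProduct_mulVec_eq_re_add_im {n : Type*} [Fintype n] {M : Matrix n n ℂ}
    (hreal : ∀ i j, (M i j).im = 0) (hsym : Mᵀ = M) (ξ : n → ℂ) :
    star ξ ⬝ᵥ M *ᵥ ξ = ((∑ i, ∑ j, (ξ i).re * (M i j).re * (ξ j).re +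
      ∑ i, ∑ j, (ξ i).im * (M i j).re * (ξ j).im : ℝ) : ℂ) := by
  have hsymm : ∀ i j, (M i j).re = (M j i).re := fun i j =>
    congrArg Complex.re (congrFun₂ hsym j i)
  apply Complex.ext
  · simp [dotProduct, mulVec, Complex.re_sum, mul_sum, Complex.mul_re, hreal,
      ← sum_add_distrib, mul_assoc]
  · simp only [dotProduct, mulVec, Complex.im_sum, mul_sum, Complex.mul_im, Complex.mul_re, hreal,
      Pi.star_apply, Complex.star_def, Complex.conj_re, Complex.conj_im, Complex.ofReal_im,
      zero_mul, add_zero, sub_zero, neg_mul, ← sub_eq_add_neg, sum_sub_distrib, sub_eq_zero]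
    rw [sum_comm]
    exact sum_congr rfl fun i _ => sum_congr rfl fun j _ => by rw [hsymm]; ring

lemma AddChar.mul_conj_mul_conj_mul_apply {G : Type*} [AddCommGroup G] [Finite G]
    (ψ : AddChar G ℂ) (a b c d : G) :
    ψ a * starRingEnd ℂ (ψ b) * (starRingEnd ℂ (ψ c) * ψ d) = ψ (a - b - (c - d)) := by
  simp only [sub_eq_add_neg, neg_add, neg_neg, map_add_eq_mul, map_neg_eq_conj]

lemma AddChar.sum_apply_intCast_eq_ite {κ : Type*} [Fintype κ] [DecidableEq κ] {L : ℕ} [NeZero L]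
    {v : κ → ℤ} (hv : ∀ a, |v a| < L) :
    ∑ ψ : AddChar (κ → ZMod L) ℂ, ψ ((Int.castAddHom (ZMod L)).compLeft κ v) =
      if v = 0 then (L : ℂ) ^ Fintype.card κ else 0 := by
  have hzero : (Int.castAddHom (ZMod L)).compLeft κ v = 0 ↔ v = 0 := by
    simp only [funext_iff, AddMonoidHom.compLeft_apply, Function.comp_apply, Int.coe_castAddHom,
      Pi.zero_apply, ZMod.intCast_zmod_eq_zero_iff_dvd]
    exact forall_congr' fun a =>
      ⟨fun h => Int.eq_zero_of_abs_lt_dvd h (hv a), fun h => h ▸ dvd_zero _⟩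
  simp [sum_apply_eq_ite, hzero, ZMod.card]

lemma Int.card_filter_add_mem_Ico (m : ℕ) (d : ℤ) :
    #{x ∈ Ico (0 : ℤ) m | x + d ∈ Ico (0 : ℤ) m} = ((m : ℤ) - |d|).toNat := by
  have : {x ∈ Ico (0 : ℤ) m | x + d ∈ Ico (0 : ℤ) m} = Ico (max 0 (-d)) (min m (m - d)) := by
    ext x
    simp only [mem_filter, mem_Ico]
    omega
  rw [this, Int.card_Ico, abs_eq_max_neg]
  omega

lemma tendsto_toNat_sub_div_nhds_one (k : ℤ) :
    Tendsto (fun m : ℕ => ((((m : ℤ) - k).toNat : ℕ) : ℝ) / m) atTop (𝓝 1) := by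
  have h : Tendsto (fun m : ℕ => 1 - (k : ℝ) / m) atTop (𝓝 1) := by
    simpa using (tendsto_const_div_atTop_nhds_zero_nat (k : ℝ)).const_sub 1
  refine h.congr' ?_
  filter_upwards [eventually_ge_atTop k.toNat, eventually_gt_atTop 0] with m hkm hm
  have hcast : ((((m : ℤ) - k).toNat : ℕ) : ℝ) = m - k := by
    rw [← Int.cast_natCast, Int.toNat_of_nonneg (by omega)]
    push_cast
    ring
  rw [hcast, sub_div, div_self (by positivity)]

section IntCube

variable {κ : Type*} [Fintype κ] [DecidableEq κ]

variable (κ) in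
noncomputable def intCube (m : ℕ) : Finset (κ → ℤ) :=
  Fintype.piFinset fun _ => Ico 0 (m : ℤ)

lemma card_filter_add_mem_intCube (m : ℕ) (d : κ → ℤ) :
    #{r ∈ intCube κ m | r + d ∈ intCube κ m} = ∏ a, ((m : ℤ) - |d a|).toNat := by
  have : {r ∈ intCube κ m | r + d ∈ intCube κ m} =
      Fintype.piFinset fun a => {x ∈ Ico (0 : ℤ) m | x + d a ∈ Ico (0 : ℤ) m} := by
    ext r
    simp [intCube, Fintype.mem_piFinset, forall_and]
  simp only [this, Fintype.card_piFinset, Int.card_filter_add_mem_Ico]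

lemma tendsto_card_filter_add_mem_intCube_div (d : κ → ℤ) :
    Tendsto (fun m : ℕ => (#{r ∈ intCube κ m | r + d ∈ intCube κ m} : ℝ) / m ^ Fintype.card κ)
      atTop (𝓝 1) := by
  have h := tendsto_finsetProd univ fun a _ => tendsto_toNat_sub_div_nhds_one |d a|
  simp only [prod_const_one] at h
  refine h.congr fun m => ?_
  rw [card_filter_add_mem_intCube, Nat.cast_prod, prod_div_distrib, prod_const, card_univ]

lemma abs_sub_sub_sub_apply_lt_of_mem_intCube {m : ℕ} {s r : κ → ℤ} (hs : s ∈ intCube κ m)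
    (hr : r ∈ intCube κ m) (p q a : κ) :
    |(s - r - (Pi.single p 1 - Pi.single q 1) : κ → ℤ) a| < (m + 1 : ℕ) := by
  have hs := Fintype.mem_piFinset.mp hs a
  have hr := Fintype.mem_piFinset.mp hr a
  have hpq : |(Pi.single p 1 - Pi.single q 1 : κ → ℤ) a| ≤ 1 := by
    simp only [Pi.sub_apply, Pi.single_apply]
    split_ifs <;> simp
  simp only [mem_Ico] at hs hr
  simp only [Pi.sub_apply, abs_lt, abs_le] at hpq ⊢
  omega

end IntCube

section QuadForms

variable {A : Type*} [AddCommGroup A] {n : Type*} [Fintype n] (Φ : A → Matrix n n ℂ)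

lemma sum_sum_mul_conj_star_dotProduct_mulVec_eq {G V ι : Type*} [AddCommGroup G] [Finite G]
    [AddCommGroup V] [Fintype ι] (ψ : AddChar G ℂ) (π : V →+ G) (C : Finset V) (τ : V → A)
    (v : ι → V) (z : ι → n → ℂ) :
    ∑ s ∈ C, ∑ r ∈ C, ψ (π s) * starRingEnd ℂ (ψ (π r)) *
        (star (∑ q, ψ (π (v q)) • z q) ⬝ᵥ Φ (τ s - τ r) *ᵥ ∑ q, ψ (π (v q)) • z q) =
      ∑ s ∈ C, ∑ r ∈ C, ∑ p, ∑ q,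
        ψ (π (s - r - (v p - v q))) * (star (z p) ⬝ᵥ Φ (τ s - τ r) *ᵥ z q) := by
  simp only [star_sum_smul_dotProduct_mulVec_sum_smul, mul_sum]
  refine sum_congr rfl fun s _ => sum_congr rfl fun r _ => sum_congr rfl fun p _ =>
    sum_congr rfl fun q _ => ?_
  rw [map_sub π, map_sub π, map_sub π, ← AddChar.mul_conj_mul_conj_mul_apply, Complex.star_def]
  ring

variable {κ : Type u} [Fintype κ] [DecidableEq κ]
  (hΦ : ∀ (ξ : n → ℂ) (ι : Type u) [Fintype ι] (τ : ι → A) (c : ι → ℂ),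
    0 ≤ ∑ i, ∑ j, c i * starRingEnd ℂ (c j) * (star ξ ⬝ᵥ Φ (τ i - τ j) *ᵥ ξ))
include hΦ

theorem sum_card_mul_star_dotProduct_mulVec_nonneg (t : κ → A) (z : κ → n → ℂ) (m : ℕ) :
    0 ≤ ∑ p, ∑ q,
      (#{r ∈ intCube κ m | r + (Pi.single p 1 - Pi.single q 1) ∈ intCube κ m} : ℂ) *
        (star (z p) ⬝ᵥ Φ (t p - t q) *ᵥ z q) := by
  set C := intCube κ m
  set L := m + 1
  set π := (Int.castAddHom (ZMod L)).compLeft κ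
  set τ := Fintype.linearCombination ℤ t
  set e : κ → κ → κ → ℤ := fun p q => Pi.single p 1 - Pi.single q 1
  have hψ : ∀ ψ : AddChar (κ → ZMod L) ℂ, 0 ≤ ∑ s ∈ C, ∑ r ∈ C, ∑ p, ∑ q,
      ψ (π (s - r - e p q)) * (star (z p) ⬝ᵥ Φ (τ s - τ r) *ᵥ z q) := fun ψ => by
    rw [← sum_sum_mul_conj_star_dotProduct_mulVec_eq]
    simp only [← sum_coe_sort C]
    exact hΦ _ C (fun s => τ s) (fun s => ψ (π s))
  have hcube : ∀ p q, ∑ s ∈ C, ∑ r ∈ C,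
      (if s - r - e p q = 0 then (L : ℂ) ^ Fintype.card κ else 0) *
        (star (z p) ⬝ᵥ Φ (τ s - τ r) *ᵥ z q) =
      (L : ℂ) ^ Fintype.card κ * ((#{r ∈ C | r + e p q ∈ C} : ℂ) *
        (star (z p) ⬝ᵥ Φ (t p - t q) *ᵥ z q)) := by
    intro p q
    have hτ : ∀ r, τ (r + e p q) - τ r = t p - t q := by
      simp [τ, e, Fintype.linearCombination_apply_single]
    simp only [ite_mul, zero_mul, sum_sum_ite_sub_sub_eq_zero, hτ, sum_const, nsmul_eq_mul]
    ring
  refine le_of_mul_le_mul_left (a := (L : ℂ) ^ Fintype.card κ) ?_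
    (pow_pos (by exact_mod_cast m.succ_pos) _)
  calc _ = (0 : ℂ) := mul_zero _
    _ ≤ ∑ ψ : AddChar (κ → ZMod L) ℂ, ∑ s ∈ C, ∑ r ∈ C, ∑ p, ∑ q,
        ψ (π (s - r - e p q)) * (star (z p) ⬝ᵥ Φ (τ s - τ r) *ᵥ z q) :=
      sum_nonneg fun ψ _ => hψ ψ
    _ = ∑ s ∈ C, ∑ r ∈ C, ∑ p, ∑ q, (∑ ψ : AddChar (κ → ZMod L) ℂ, ψ (π (s - r - e p q))) *
          (star (z p) ⬝ᵥ Φ (τ s - τ r) *ᵥ z q) := by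
      simp_rw [sum_mul, sum_comm (s := (univ : Finset (AddChar (κ → ZMod L) ℂ)))]
    _ = _ := by
      rw [sum_sum_sum_sum_comm, mul_sum]
      refine sum_congr rfl fun p _ => ?_
      rw [mul_sum]
      refine sum_congr rfl fun q _ => ?_
      rw [← hcube]
      refine sum_congr rfl fun s hs => sum_congr rfl fun r hr => ?_
      rw [AddChar.sum_apply_intCast_eq_ite (abs_sub_sub_sub_apply_lt_of_mem_intCube hs hr p q)]

theorem sum_star_dotProduct_mulVec_nonneg (t : κ → A) (z : κ → n → ℂ) :
    0 ≤ ∑ p, ∑ q, star (z p) ⬝ᵥ Φ (t p - t q) *ᵥ z q := by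
  set w : ℕ → κ → κ → ℝ := fun m p q =>
    #{r ∈ intCube κ m | r + (Pi.single p 1 - Pi.single q 1) ∈ intCube κ m} /
      (m : ℝ) ^ Fintype.card κ
  have hlim : Tendsto (fun m => ∑ p, ∑ q, (w m p q : ℂ) * (star (z p) ⬝ᵥ Φ (t p - t q) *ᵥ z q))
      atTop (𝓝 (∑ p, ∑ q, star (z p) ⬝ᵥ Φ (t p - t q) *ᵥ z q)) := by
    refine tendsto_finsetSum _ fun p _ => tendsto_finsetSum _ fun q _ => ?_
    simpa [w] using ((tendsto_card_filter_add_mem_intCube_div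
      (Pi.single p 1 - Pi.single q 1 : κ → ℤ)).ofReal).mul_const
        (star (z p) ⬝ᵥ Φ (t p - t q) *ᵥ z q)
  refine ge_of_tendsto' hlim fun m => ?_
  calc (0 : ℂ) ≤ (((m : ℝ) ^ Fintype.card κ)⁻¹ : ℝ) * ∑ p, ∑ q,
        (#{r ∈ intCube κ m | r + (Pi.single p 1 - Pi.single q 1) ∈ intCube κ m} : ℂ) *
          (star (z p) ⬝ᵥ Φ (t p - t q) *ᵥ z q) :=
      mul_nonneg (Complex.zero_le_real.mpr (by positivity))
        (sum_card_mul_star_dotProduct_mulVec_nonneg Φ hΦ t z m)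
    _ = _ := by
      simp only [w, mul_sum, div_eq_inv_mul]
      push_cast
      simp only [mul_assoc]

end QuadForms

theorem IsPosDefFun.sum_nonneg {f : ℝ → ℝ} (hf : IsPosDefFun f) {ι : Type*} [Fintype ι]
    (t : ι → ℝ) (c : ι → ℂ) :
    0 ≤ ∑ i, ∑ j, c i * starRingEnd ℂ (c j) * (f (t i - t j) : ℂ) :=
  let e := (Fintype.equivFin ι).symm
  (hf _ (t ∘ e) (c ∘ e)).trans_eq <|
    Fintype.sum_equiv e _ _ fun _ => Fintype.sum_equiv e _ _ fun _ => rfl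

theorem IsPosDefFun.add {f g : ℝ → ℝ} (hf : IsPosDefFun f) (hg : IsPosDefFun g) :
    IsPosDefFun (f + g) := fun N t c => by
  simpa [mul_add, sum_add_distrib] using add_nonneg (hf N t c) (hg N t c)

theorem IsPosDefMatrixFun.isPosDefFun_quadForm {K : ℕ} {H : ℝ → Matrix (Fin K) (Fin K) ℂ}
    (hH : IsPosDefMatrixFun H) (hreal : ∀ t i j, (H t i j).im = 0) (x : Fin K → ℝ) :
    IsPosDefFun (fun t => ∑ i, ∑ j, x i * (H t i j).re * x j) := by
  intro N t c
  refine (hH N t fun i => starRingEnd ℂ (c i) • fun k => (x k : ℂ)).trans_eq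
    (sum_congr rfl fun i _ => sum_congr rfl fun j _ => ?_)
  simp only [star_smul, mulVec_smul, dotProduct_smul, smul_dotProduct, smul_eq_mul,
    Complex.star_def, Complex.conj_conj, star_ofReal_dotProduct_mulVec_ofReal (hreal _)]
  ring

theorem posDefMatrixFun_iff_quadForm_posDef {K : ℕ}
    (H : ℝ → Matrix (Fin K) (Fin K) ℂ)
    (hreal : ∀ t i j, (H t i j).im = 0)
    (hsym : ∀ t, (H t)ᵀ = H t) :
    IsPosDefMatrixFun H ↔
      ∀ x : Fin K → ℝ, IsPosDefFun (fun t => ∑ i, ∑ j, x i * (H t i j).re * x j) := by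
  refine ⟨fun hH x => hH.isPosDefFun_quadForm hreal x, fun hyp N t z => ?_⟩
  refine sum_star_dotProduct_mulVec_nonneg H (fun ξ ι _ τ c => ?_) t z
  have := ((hyp fun k => (ξ k).re).add (hyp fun k => (ξ k).im)).sum_nonneg τ c
  simpa only [star_dotProduct_mulVec_eq_re_add_im (hreal _) (hsym _), Pi.add_apply] using this
end

section
/- Let G : [0,∞) → ℝ^{K×K} be a decay kernel that is nonincreasing (i.e., t ↦ x^⊤ G(t) x is nonincreasing for every x ∈ ℝ^K) and positive definite (i.e., the extension \tilde G with \tilde G(t) = G(t) for t > 0, \tilde G(0) = (G(0) + G(0)^⊤)/2, \tilde G(t) = G(−t)^⊤ for t < 0, is a positive definite matrix-valued function). Then G is nonnegative, i.e., x^⊤ G(t) x ≥ 0 for all x ∈ ℝ^K and t ≥ 0. -/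
open Matrix BigOperators
open scoped ComplexOrder

/-- The extension `\tilde G` of a decay kernel `G` to the whole real line. -/
noncomputable def tildeKernel {K : ℕ} (G : ℝ → Matrix (Fin K) (Fin K) ℝ) :
    ℝ → Matrix (Fin K) (Fin K) ℝ :=
  fun t => if 0 < t then G t else if t = 0 then (2 : ℝ)⁻¹ • ((G 0)ᵀ + G 0) else (G (-t))ᵀ

/-!
Write `q s = xᵀ G(s) x`, so `q` is antitone on `[0, ∞)` and the quadratic form of `G̃(t)` at `x`
is `q |t|`. Testing positive definiteness of `G̃` at the equally spaced times `0, t, …, n t`, all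
with the vector `x`, gives `0 ≤ ∑ᵢⱼ q (|i - j| t) ≤ (n + 1) (q 0 + n q t)`. Letting `n → ∞`
forces `q t ≥ 0`.
-/

theorem nonneg_of_forall_nonneg_add_nat_mul {α : Type*} [Field α] [LinearOrder α]
    [IsStrictOrderedRing α] [Archimedean α] {a b : α} (h : ∀ n : ℕ, 0 ≤ a + n * b) : 0 ≤ b := by
  by_contra! hb
  obtain ⟨n, hn⟩ := exists_nat_gt (a / -b)
  rw [div_lt_iff₀ (neg_pos.2 hb)] at hn
  linarith [h n]

theorem star_ofReal_dotProduct_map_ofReal_mulVec {n : Type*} [Fintype n]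
    (M : Matrix n n ℝ) (x : n → ℝ) :
    star (fun k => (x k : ℂ)) ⬝ᵥ M.map Complex.ofReal *ᵥ (fun k => (x k : ℂ)) =
      ((x ⬝ᵥ M *ᵥ x : ℝ) : ℂ) := by
  simp only [dotProduct, mulVec, Matrix.map_apply, Pi.star_apply, Complex.star_def,
    Complex.conj_ofReal]
  push_cast
  simp only [Finset.mul_sum]

theorem dotProduct_tildeKernel_mulVec_self {K : ℕ} (G : ℝ → Matrix (Fin K) (Fin K) ℝ)
    (x : Fin K → ℝ) (t : ℝ) :
    x ⬝ᵥ tildeKernel G t *ᵥ x = x ⬝ᵥ G |t| *ᵥ x := by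
  unfold tildeKernel
  rcases lt_trichotomy t 0 with h | rfl | h
  · rw [if_neg h.not_gt, if_neg h.ne, abs_of_neg h, dotProduct_transpose_mulVec]
  · rw [if_neg (lt_irrefl 0), if_pos rfl, abs_zero, smul_mulVec, dotProduct_smul, add_mulVec,
      dotProduct_add, dotProduct_transpose_mulVec, smul_eq_mul]
    ring
  · rw [if_pos h, abs_of_pos h]

theorem sum_dotProduct_abs_sub_mulVec_nonneg {K : ℕ} {G : ℝ → Matrix (Fin K) (Fin K) ℝ}
    (hpd : IsPosDefMatrixFun (fun t => (tildeKernel G t).map Complex.ofReal))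
    {N : ℕ} (t : Fin N → ℝ) (x : Fin K → ℝ) :
    0 ≤ ∑ i, ∑ j, x ⬝ᵥ G |t i - t j| *ᵥ x := by
  have h := hpd N t fun _ k => x k
  simp only [star_ofReal_dotProduct_map_ofReal_mulVec, dotProduct_tildeKernel_mulVec_self] at h
  exact_mod_cast h

theorem sum_abs_sub_mul_le_of_antitoneOn {q : ℝ → ℝ} (hq : AntitoneOn q (Set.Ici 0))
    {t : ℝ} (ht : 0 ≤ t) (n : ℕ) :
    ∑ i : Fin (n + 1), ∑ j : Fin (n + 1), q |(i : ℝ) * t - j * t| ≤ (n + 1) * (q 0 + n * q t) := by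
  have hterm (i j : Fin (n + 1)) : q |(i : ℝ) * t - j * t| ≤ if i = j then q 0 else q t := by
    split_ifs with hij
    · simp [hij]
    · have hij' : (1 : ℝ) ≤ |(i : ℝ) - j| := by
        rcases Nat.lt_or_gt_of_ne (Fin.val_ne_of_ne hij) with h | h
        · have h' : (i : ℝ) + 1 ≤ j := by exact_mod_cast h
          exact le_abs.2 (Or.inr (by linarith))
        · have h' : (j : ℝ) + 1 ≤ i := by exact_mod_cast h
          exact le_abs.2 (Or.inl (by linarith))
      refine hq ht (abs_nonneg _ : (0 : ℝ) ≤ _) ?_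
      rw [← sub_mul, abs_mul, abs_of_nonneg ht]
      nlinarith
  calc ∑ i : Fin (n + 1), ∑ j : Fin (n + 1), q |(i : ℝ) * t - j * t|
      ≤ ∑ i : Fin (n + 1), ∑ j : Fin (n + 1), if i = j then q 0 else q t :=
        Finset.sum_le_sum fun i _ => Finset.sum_le_sum fun j _ => hterm i j
    _ = (n + 1) * (q 0 + n * q t) := by
        simp only [Finset.sum_ite, Finset.filter_eq, Finset.mem_univ, ↓reduceIte, Finset.sum_const,
          Finset.card_singleton, one_smul, Finset.filter_ne, Finset.card_erase_of_mem,
          Finset.card_univ, Fintype.card_fin, add_tsub_cancel_right, nsmul_eq_mul, smul_add,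
          Nat.cast_add, Nat.cast_one]
        ring

theorem nonincreasing_posDef_kernel_nonneg {K : ℕ}
    (G : ℝ → Matrix (Fin K) (Fin K) ℝ)
    (hmono : ∀ x : Fin K → ℝ, ∀ s t : ℝ, 0 ≤ s → s ≤ t →
      x ⬝ᵥ (G t) *ᵥ x ≤ x ⬝ᵥ (G s) *ᵥ x)
    (hpd : IsPosDefMatrixFun (fun t => (tildeKernel G t).map Complex.ofReal)) :
    ∀ t : ℝ, 0 ≤ t → ∀ x : Fin K → ℝ, 0 ≤ x ⬝ᵥ (G t) *ᵥ x := by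
  intro t ht x
  set q : ℝ → ℝ := fun s => x ⬝ᵥ G s *ᵥ x
  have hq : AntitoneOn q (Set.Ici 0) := fun s hs _ _ hsu => hmono x s _ hs hsu
  refine nonneg_of_forall_nonneg_add_nat_mul (a := q 0) fun n => ?_
  have hpos := sum_dotProduct_abs_sub_mulVec_nonneg hpd (fun i : Fin (n + 1) => (i : ℝ) * t) x
  have hle := sum_abs_sub_mul_le_of_antitoneOn hq ht n
  exact nonneg_of_mul_nonneg_right (hpos.trans hle) (by positivity)
end

section
/- If a nonincreasing positive definite one-dimensional kernel is considered, i.e., g : [0,∞) → ℝ is nonincreasing and the extension t ↦ g(|t|) is a positive definite function, then g(t) ≥ 0 for all t ≥ 0. -/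
/-!
Put weight 1 at the equally spaced points 0, t, …, n t. The diagonal terms contribute g 0 and,
by monotonicity, every off-diagonal term is at most g t, so positive definiteness gives
0 ≤ (n + 1) (g 0 + n g t) for every n. If g t were negative this would fail for large n.
-/

theorem nonneg_of_forall_add_nat_mul_nonneg {R : Type*} [Field R] [LinearOrder R]
    [IsStrictOrderedRing R] [Archimedean R] {a b : R} (h : ∀ n : ℕ, 0 ≤ a + n * b) : 0 ≤ b := by
  by_contra! hb
  obtain ⟨n, hn⟩ := Archimedean.arch (a + 1) (neg_pos.mpr hb)
  rw [nsmul_eq_mul, mul_neg] at hn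
  linarith [h n]

theorem le_abs_natCast_mul_sub_natCast_mul {i j : ℕ} (hij : i ≠ j) {t : ℝ} (ht : 0 ≤ t) :
    t ≤ |i * t - j * t| := by
  have hdist : (1 : ℝ) ≤ |(i : ℝ) - j| := by
    have : (1 : ℤ) ≤ |(i : ℤ) - j| := Int.one_le_abs (sub_ne_zero.mpr (by exact_mod_cast hij))
    exact_mod_cast this
  rw [← sub_mul, abs_mul, abs_of_nonneg ht]
  nlinarith

theorem sum_sum_ite_eq_const (n : ℕ) (a b : ℝ) :
    ∑ i : Fin (n + 1), ∑ j : Fin (n + 1), (if i = j then a else b) = (n + 1) * (a + n * b) := by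
  simp only [Finset.sum_ite, Finset.filter_eq, Finset.filter_ne, Finset.mem_univ, if_true,
    Finset.sum_const, Finset.card_singleton, Finset.card_erase_of_mem, Finset.card_univ,
    Fintype.card_fin, nsmul_eq_mul, Nat.cast_one, one_mul, add_tsub_cancel_right]
  push_cast
  ring

theorem sum_sum_antitoneOn_abs_sub_le {g : ℝ → ℝ} (hg : AntitoneOn g (Set.Ici 0)) {t : ℝ}
    (ht : 0 ≤ t) (n : ℕ) :
    ∑ i : Fin (n + 1), ∑ j : Fin (n + 1), g |(i : ℝ) * t - (j : ℝ) * t| ≤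
      (n + 1) * (g 0 + n * g t) := by
  rw [← sum_sum_ite_eq_const]
  gcongr with i _ j _
  split_ifs with hij
  · simp [hij]
  · have hdist := le_abs_natCast_mul_sub_natCast_mul (Fin.val_injective.ne hij) ht
    exact hg ht (ht.trans hdist) hdist

theorem nonincreasing_posDef_scalar_nonneg (g : ℝ → ℝ)
    (hmono : ∀ s t : ℝ, 0 ≤ s → s ≤ t → g t ≤ g s)
    (hpd : ∀ (N : ℕ) (t : Fin N → ℝ) (x : Fin N → ℝ),
      0 ≤ ∑ i, ∑ j, x i * x j * g |t i - t j|) :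
    ∀ t : ℝ, 0 ≤ t → 0 ≤ g t := by
  intro t ht
  have hanti : AntitoneOn g (Set.Ici 0) := fun s hs _ _ hst => hmono s _ hs hst
  refine nonneg_of_forall_add_nat_mul_nonneg (a := g 0) fun n => ?_
  have hquad := hpd (n + 1) (fun i => i * t) (fun _ => 1)
  simp only [mul_one, one_mul] at hquad
  exact nonneg_of_mul_nonneg_right (hquad.trans (sum_sum_antitoneOn_abs_sub_le hanti ht n))
    (by positivity)
end

section
/- Let G : [0,∞) → ℝ^{K×K} be symmetric (G(t)^⊤ = G(t) for all t), nonnegative, nonincreasing, and convex. Then G is positive definite, i.e., the function t ↦ G(|t|) on ℝ is a positive definite matrix-valued function. -/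
/-!
On the finite set `D` of distances `|tᵢ - tⱼ|`, a convex nonincreasing `G` agrees with its
piecewise-linear interpolant, and peeling off linear pieces from the right writes it as
`G (max D) + ∑ a ∈ D, (a - r)₊ • Λ a`, where `Λ a ⪰ 0` is the jump of slope at `a` (Pólya's
argument). The scalar kernel `(a - |tᵢ - tⱼ|)₊` is the Gram matrix of the indicators of the
intervals `(tᵢ, tᵢ + a]` in `L²(ℝ)`, and the Kronecker product of two positive semidefinite
matrices is positive semidefinite.
-/

open Matrix BigOperators
open scoped ComplexOrder

open Finset MeasureTheory
open scoped Kronecker MatrixOrder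

section MonotoneSlopes

variable {𝕜 β : Type*} [Field 𝕜] [AddCommGroup β] [Module 𝕜 β]

lemma slope_add_sub_smul (f : 𝕜 → β) (c : 𝕜) (v : β) {x y : 𝕜} (hxy : x ≠ y) :
    slope (fun r => f r + (c - r) • v) x y = slope f x y - v := by
  simp only [slope_def_module]
  rw [show f y + (c - y) • v - (f x + (c - x) • v) = (f y - f x) - (y - x) • v by module,
    smul_sub, smul_smul, inv_mul_cancel₀ (sub_ne_zero.mpr hxy.symm), one_smul]

variable [LinearOrder 𝕜] [PartialOrder β]

/-- Convexity in a form that makes sense on finite sets and for ordered-module-valued `f`. -/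
def HasMonotoneSlopesOn (f : 𝕜 → β) (s : Set 𝕜) : Prop :=
  ∀ ⦃x⦄, x ∈ s → ∀ ⦃y⦄, y ∈ s → ∀ ⦃x'⦄, x' ∈ s → ∀ ⦃y'⦄, y' ∈ s →
    x < y → x' < y' → x ≤ x' → y ≤ y' → slope f x y ≤ slope f x' y'

lemma HasMonotoneSlopesOn.mono {f : 𝕜 → β} {s t : Set 𝕜} (hf : HasMonotoneSlopesOn f t)
    (hst : s ⊆ t) : HasMonotoneSlopesOn f s :=
  fun _ hx _ hy _ hx' _ hy' => hf (hst hx) (hst hy) (hst hx') (hst hy')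

lemma HasMonotoneSlopesOn.add_sub_smul [IsOrderedAddMonoid β] {f : 𝕜 → β} {s : Set 𝕜}
    (hf : HasMonotoneSlopesOn f s) (c : 𝕜) (v : β) :
    HasMonotoneSlopesOn (fun r => f r + (c - r) • v) s := by
  intro x hx y hy x' hx' y' hy' hxy hxy' hxx' hyy'
  rw [slope_add_sub_smul f c v hxy.ne, slope_add_sub_smul f c v hxy'.ne]
  exact sub_le_sub_right (hf hx hy hx' hy' hxy hxy' hxx' hyy') v

variable [IsStrictOrderedRing 𝕜]

lemma ConvexOn.hasMonotoneSlopesOn {s : Set 𝕜} {f : 𝕜 → 𝕜} (hf : ConvexOn 𝕜 s f) :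
    HasMonotoneSlopesOn f s := by
  intro x hx y hy x' hx' y' hy' hxy hxy' hxx' hyy'
  calc slope f x y ≤ slope f x y' :=
        hf.slope_mono hx ⟨hy, hxy.ne'⟩ ⟨hy', (hxy.trans_le hyy').ne'⟩ hyy'
    _ = slope f y' x := slope_comm f x y'
    _ ≤ slope f y' x' :=
        hf.slope_mono hy' ⟨hx, (hxy.trans_le hyy').ne⟩ ⟨hx', hxy'.ne⟩ hxx'
    _ = slope f x' y' := slope_comm f y' x'

variable [IsOrderedAddMonoid β] [PosSMulMono 𝕜 β]

lemma HasMonotoneSlopesOn.antitoneOn_add_sub_smul_slope {f : 𝕜 → β} {s t : Set 𝕜}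
    (hf : HasMonotoneSlopesOn f s) {a b : 𝕜} (ha : a ∈ s) (hb : b ∈ s) (hba : b < a)
    (hts : t ⊆ s) (htb : ∀ x ∈ t, x ≤ b) :
    AntitoneOn (fun r => f r + (a - r) • slope f b a) t := by
  intro x hx y hy hxy
  rcases hxy.eq_or_lt with rfl | hlt
  · rfl
  refine (slope_nonpos_iff_of_le (f := fun r => f r + (a - r) • slope f b a) hlt.le).mp ?_
  rw [slope_add_sub_smul f a _ hlt.ne, sub_nonpos]
  exact hf (hts hx) (hts hy) hb ha hlt hba (htb x hx) ((htb y hy).trans hba.le)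

theorem exists_eq_add_sum_max_sub_smul {D : Finset 𝕜} (hD : D.Nonempty) {f : 𝕜 → β}
    (hslope : HasMonotoneSlopesOn f D) (hanti : AntitoneOn f D) :
    ∃ Λ : 𝕜 → β, (∀ a ∈ D, 0 ≤ Λ a) ∧
      ∀ r ∈ D, f r = f (D.max' hD) + ∑ a ∈ D, max (a - r) 0 • Λ a := by
  classical
  induction D using Finset.induction_on_max generalizing f with
  | empty => exact absurd hD not_nonempty_empty
  | insert a s ha ih =>
    rcases s.eq_empty_or_nonempty with rfl | hs
    · exact ⟨0, by simp, by simp⟩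
    have has : a ∉ s := fun h => (ha a h).false
    set b := s.max' hs
    have hbs : b ∈ s := s.max'_mem hs
    have hba : b < a := ha b hbs
    have hmax : (insert a s).max' hD = a := by
      rw [max'_insert a s hs, max_eq_left hba.le]
    -- `f r + (a - r) • σ` takes the same value `f a` at `b` and at `a`, so `a` is no longer a knot
    set σ := slope f b a
    have hσ : σ ≤ 0 :=
      (slope_nonpos_iff_of_le hba.le).mpr
        (hanti (mem_insert_of_mem hbs) (mem_insert_self a s) hba.le)
    have hgb : f b + (a - b) • σ = f a := by rw [sub_smul_slope, vsub_eq_sub, add_sub_cancel]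
    obtain ⟨Λ, hΛ, hg⟩ := ih hs (f := fun r => f r + (a - r) • σ)
      ((hslope.add_sub_smul a σ).mono (by simp))
      (hslope.antitoneOn_add_sub_smul_slope (mem_insert_self a s) (mem_insert_of_mem hbs)
        hba (by simp) fun x hx => le_max' s x hx)
    refine ⟨Function.update Λ a (-σ), ?_, fun r hr => ?_⟩
    · intro c hc
      rcases mem_insert.mp hc with rfl | hc
      · simpa using hσ
      · simpa [Function.update_of_ne (ha c hc).ne] using hΛ c hc
    rw [hmax, sum_insert has, Function.update_self,
      sum_congr rfl fun c hc => by rw [Function.update_of_ne (ha c hc).ne]]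
    rcases mem_insert.mp hr with rfl | hr
    · rw [sub_self, max_self, zero_smul, zero_add,
        sum_eq_zero fun c hc => by rw [max_eq_right (sub_nonpos.mpr (ha c hc).le), zero_smul],
        add_zero]
    · have := hg r hr
      rw [hgb] at this
      rw [max_eq_left (sub_nonneg.mpr (ha r hr).le)]
      linear_combination (norm := module) this

end MonotoneSlopes

section Kernel

variable {𝕜 ι κ : Type*} [RCLike 𝕜] [Fintype ι] [Fintype κ]

lemma sum_star_dotProduct_smul_mulVec_eq_kronecker (φ : Matrix ι ι 𝕜) (Λ : Matrix κ κ 𝕜)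
    (z : ι → κ → 𝕜) :
    ∑ i, ∑ j, star (z i) ⬝ᵥ (φ i j • Λ) *ᵥ z j
      = star (fun p : ι × κ => z p.1 p.2) ⬝ᵥ (φ ⊗ₖ Λ) *ᵥ fun p => z p.1 p.2 := by
  simp only [dotProduct, mulVec, Fintype.sum_prod_type, kroneckerMap_apply, Matrix.smul_apply,
    smul_eq_mul, Finset.mul_sum, Pi.star_apply]
  exact sum_congr rfl fun _ _ => Finset.sum_comm

lemma sum_star_dotProduct_smul_mulVec_nonneg {φ : Matrix ι ι 𝕜} {Λ : Matrix κ κ 𝕜}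
    (hφ : φ.PosSemidef) (hΛ : Λ.PosSemidef) (z : ι → κ → 𝕜) :
    0 ≤ ∑ i, ∑ j, star (z i) ⬝ᵥ (φ i j • Λ) *ᵥ z j := by
  rw [sum_star_dotProduct_smul_mulVec_eq_kronecker]
  exact (hφ.kronecker hΛ).dotProduct_mulVec_nonneg _

lemma sum_star_dotProduct_sum_smul_mulVec_nonneg {α : Type*} {s : Finset α}
    {φ : α → Matrix ι ι 𝕜} {Λ : α → Matrix κ κ 𝕜} (hφ : ∀ a ∈ s, (φ a).PosSemidef)
    (hΛ : ∀ a ∈ s, (Λ a).PosSemidef) (z : ι → κ → 𝕜) :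
    0 ≤ ∑ i, ∑ j, star (z i) ⬝ᵥ (∑ a ∈ s, φ a i j • Λ a) *ᵥ z j := by
  simp only [Matrix.sum_mulVec, dotProduct_sum]
  rw [sum_congr rfl fun i _ => Finset.sum_comm, Finset.sum_comm]
  exact sum_nonneg fun a ha => sum_star_dotProduct_smul_mulVec_nonneg (hφ a ha) (hΛ a ha) z

lemma volume_real_Ioc_inter_Ioc_add (x y a : ℝ) :
    volume.real (Set.Ioc x (x + a) ∩ Set.Ioc y (y + a)) = max (a - |x - y|) 0 := by
  rw [Set.Ioc_inter_Ioc, Real.volume_real_Ioc, min_add_add_right, ← max_sub_min_eq_abs]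
  congr 1
  rw [max_comm y, min_comm y]
  ring

lemma posSemidef_max_sub_abs_sub (a : ℝ) (t : ι → ℝ) :
    (Matrix.of fun i j => ((max (a - |t i - t j|) 0 : ℝ) : 𝕜)).PosSemidef := by
  convert posSemidef_gram 𝕜 fun i =>
    indicatorConstLp 2 (measurableSet_Ioc (a := t i) (b := t i + a))
      (measure_Ioc_lt_top (μ := volume)).ne (1 : 𝕜) using 1
  ext i j
  simp [gram, L2.inner_indicatorConstLp_one_indicatorConstLp_one, volume_real_Ioc_inter_Ioc_add]

lemma posSemidef_of_const_one : (Matrix.of fun (_ _ : ι) => (1 : 𝕜)).PosSemidef := by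
  simpa [vecMulVec] using posSemidef_vecMulVec_self_star (1 : ι → 𝕜)

end Kernel

namespace Matrix

variable {n : Type*} [Fintype n]

lemma dotProduct_slope_mulVec {𝕜 : Type*} [Field 𝕜] (G : 𝕜 → Matrix n n 𝕜) (u v : n → 𝕜)
    (x y : 𝕜) : u ⬝ᵥ slope G x y *ᵥ v = slope (fun t => u ⬝ᵥ G t *ᵥ v) x y := by
  simp only [slope_def_module, smul_mulVec, sub_mulVec, dotProduct_smul, dotProduct_sub,
    smul_eq_mul]

lemma le_of_forall_dotProduct_mulVec_le {A B : Matrix n n ℝ} (hA : Aᵀ = A) (hB : Bᵀ = B)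
    (h : ∀ v, v ⬝ᵥ A *ᵥ v ≤ v ⬝ᵥ B *ᵥ v) : A ≤ B := by
  rw [le_iff, posSemidef_iff_dotProduct_mulVec]
  refine ⟨?_, fun v => ?_⟩
  · rw [IsHermitian, conjTranspose_eq_transpose_of_trivial, transpose_sub, hA, hB]
  · simpa [sub_mulVec] using h v

lemma hasMonotoneSlopesOn_of_convexOn_dotProduct_mulVec {G : ℝ → Matrix n n ℝ} {s : Set ℝ}
    (hsym : ∀ t ∈ s, (G t)ᵀ = G t) (hconv : ∀ v, ConvexOn ℝ s fun t => v ⬝ᵥ G t *ᵥ v) :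
    HasMonotoneSlopesOn G s := by
  have hslope_symm : ∀ ⦃x⦄, x ∈ s → ∀ ⦃y⦄, y ∈ s → (slope G x y)ᵀ = slope G x y :=
    fun x hx y hy => by
      simp only [slope_def_module, transpose_smul, transpose_sub, hsym x hx, hsym y hy]
  intro x hx y hy x' hx' y' hy' hxy hxy' hxx' hyy'
  refine le_of_forall_dotProduct_mulVec_le (hslope_symm hx hy) (hslope_symm hx' hy') fun v => ?_
  rw [dotProduct_slope_mulVec, dotProduct_slope_mulVec]
  exact (hconv v).hasMonotoneSlopesOn hx hy hx' hy' hxy hxy' hxx' hyy'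

lemma antitoneOn_of_antitoneOn_dotProduct_mulVec {G : ℝ → Matrix n n ℝ} {s : Set ℝ}
    (hsym : ∀ t ∈ s, (G t)ᵀ = G t) (hanti : ∀ v, AntitoneOn (fun t => v ⬝ᵥ G t *ᵥ v) s) :
    AntitoneOn G s :=
  fun x hx y hy hxy =>
    le_of_forall_dotProduct_mulVec_le (hsym y hy) (hsym x hx) fun v => hanti v hx hy hxy

lemma PosSemidef.map_algebraMap {𝕜 : Type*} [RCLike 𝕜] {A : Matrix n n ℝ} (hA : A.PosSemidef) :
    (A.map (algebraMap ℝ 𝕜)).PosSemidef := by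
  classical
  obtain ⟨B, rfl⟩ := CStarAlgebra.nonneg_iff_eq_star_mul_self.mp hA.nonneg
  rw [Matrix.map_mul, star_eq_conjTranspose, conjTranspose_map _ fun r => algebraMap_star_comm r]
  exact posSemidef_conjTranspose_mul_self _

end Matrix

theorem convex_kernel_posDef {K : ℕ}
    (G : ℝ → Matrix (Fin K) (Fin K) ℝ)
    (hsym : ∀ t : ℝ, 0 ≤ t → (G t)ᵀ = G t)
    (hnonneg : ∀ t : ℝ, 0 ≤ t → ∀ x : Fin K → ℝ, 0 ≤ x ⬝ᵥ (G t) *ᵥ x)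
    (hmono : ∀ x : Fin K → ℝ, ∀ s t : ℝ, 0 ≤ s → s ≤ t →
      x ⬝ᵥ (G t) *ᵥ x ≤ x ⬝ᵥ (G s) *ᵥ x)
    (hconv : ∀ x : Fin K → ℝ, ConvexOn ℝ (Set.Ici (0 : ℝ)) (fun t => x ⬝ᵥ (G t) *ᵥ x)) :
    IsPosDefMatrixFun (fun t => (G |t|).map Complex.ofReal) := by
  intro N t z
  rcases isEmpty_or_nonempty (Fin N) with hN | hN
  · simp
  set D := univ.image fun p : Fin N × Fin N => |t p.1 - t p.2|
  have hD : D.Nonempty := univ_nonempty.image _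
  have hD0 : (D : Set ℝ) ⊆ Set.Ici 0 := by simp [D, Set.range_subset_iff]
  obtain ⟨Λ, hΛ, hG⟩ := exists_eq_add_sum_max_sub_smul hD (f := G)
    ((hasMonotoneSlopesOn_of_convexOn_dotProduct_mulVec hsym hconv).mono hD0)
    ((antitoneOn_of_antitoneOn_dotProduct_mulVec hsym
      fun x _ hs _ _ hst => hmono x _ _ hs hst).mono hD0)
  have hC : (G (D.max' hD)).PosSemidef :=
    (le_of_forall_dotProduct_mulVec_le (by simp) (hsym _ (hD0 (D.max'_mem hD)))
      fun x => by simpa using hnonneg _ (hD0 (D.max'_mem hD)) x).posSemidef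
  have hkernel : ∀ i j, (G |t i - t j|).map Complex.ofReal =
      Matrix.of (fun _ _ => (1 : ℂ)) i j • (G (D.max' hD)).map Complex.ofReal +
        ∑ a ∈ D, Matrix.of (fun i j => ((max (a - |t i - t j|) 0 : ℝ) : ℂ)) i j •
          (Λ a).map Complex.ofReal := by
    intro i j
    rw [hG _ (mem_image_of_mem _ (mem_univ (i, j)))]
    ext k l
    simp [Matrix.sum_apply]
  simp only [hkernel, add_mulVec, dotProduct_add, sum_add_distrib]
  exact add_nonneg
    (sum_star_dotProduct_smul_mulVec_nonneg posSemidef_of_const_one hC.map_algebraMap z)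
    (sum_star_dotProduct_sum_smul_mulVec_nonneg (fun a _ => posSemidef_max_sub_abs_sub a t)
      (fun a ha => (hΛ a ha).posSemidef.map_algebraMap) z)
end

section
/- Let G : [0,∞) → ℝ^{K×K} be symmetric, nonnegative, nonincreasing, and convex. Then t ↦ G(|t|) is strictly positive definite if and only if for each nonzero x ∈ ℝ^K the function t ↦ x^⊤ G(t) x is nonconstant. -/
open Matrix BigOperators
open scoped ComplexOrder

/-- `H` is a strictly positive definite matrix-valued function: for distinct times,
the quadratic sum is nonnegative and vanishes only for zero vectors. -/
def IsStrictPosDefMatrixFun {K : ℕ} (H : ℝ → Matrix (Fin K) (Fin K) ℂ) : Prop :=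
  ∀ (N : ℕ) (t : Fin N → ℝ) (z : Fin N → (Fin K → ℂ)), Function.Injective t →
    0 ≤ ∑ i, ∑ j, star (z i) ⬝ᵥ (H (t i - t j)) *ᵥ (z j) ∧
      ((∑ i, ∑ j, star (z i) ⬝ᵥ (H (t i - t j)) *ᵥ (z j)) = 0 → ∀ i, z i = 0)

/-!
Pólya's argument. Fix distinct times `tᵢ` and a finite set `D ⊆ [0, ∞)` containing the distances
`|tᵢ - tⱼ|`, listed as `d 0 < ⋯ < d m`. On `D`, `G` coincides with its piecewise linear interpolant,
which is `G (d m) + ∑ₖ tent (d (k + 1)) • Cₖ`, where `tent s τ = max (s - |τ|) 0` and `Cₖ` is the jump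
of the slope of `G` at `d (k + 1)`; convexity and monotonicity make every `Cₖ` positive
semidefinite. The tent kernel is the Gram kernel of the indicators of `[tᵢ, tᵢ + s)` in `L²(ℝ)`,
which are linearly independent, so it is strictly positive definite. Hence the block matrix of
`G (|tᵢ - tⱼ|)` is a sum of Kronecker products of positive semidefinite matrices, and if its
quadratic form vanishes at `x` then every `Cₖ` kills every block `xᵢ`, so `xᵢ ⬝ G xᵢ` is constant on
`D`. Putting into `D` two points where it differs forces `x = 0`. Conversely, if `x ⬝ G x` is
constant, the vectors `x, -x` at the times `0, 1` annihilate the quadratic form.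
-/

open MeasureTheory Finset
open scoped InnerProductSpace Kronecker MatrixOrder

noncomputable section

def tent (s τ : ℝ) : ℝ := max (s - |τ|) 0

lemma tent_abs (s τ : ℝ) : tent s |τ| = tent s τ := by
  rw [tent, tent, abs_abs]

def kernelMatrix {R ι : Type*} (φ : ℝ → R) (t : ι → ℝ) : Matrix ι ι R :=
  of fun i j => φ (t i - t j)

def blockKernel {R ι n : Type*} (H : ℝ → Matrix n n R) (t : ι → ℝ) :
    Matrix (ι × n) (ι × n) R :=
  of fun x y => H (t x.1 - t y.1) x.2 y.2

section Tent

variable {𝕜 ι : Type*} [RCLike 𝕜]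

variable (𝕜) in
def indicatorIco (a s : ℝ) : Lp 𝕜 2 (volume : Measure ℝ) :=
  indicatorConstLp 2 (measurableSet_Ico (a := a) (b := a + s)) measure_Ico_lt_top.ne 1

lemma inner_indicatorIco (a b s s' : ℝ) :
    ⟪indicatorIco 𝕜 a s, indicatorIco 𝕜 b s'⟫_𝕜 =
      (max (min (a + s) (b + s') - max a b) 0 : ℝ) := by
  rw [indicatorIco, indicatorIco, L2.inner_indicatorConstLp_one_indicatorConstLp_one _ _
    measure_Ico_lt_top.ne measure_Ico_lt_top.ne, Set.Ico_inter_Ico, Real.volume_real_Ico]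

lemma kernelMatrix_tent_eq_gram (s : ℝ) (t : ι → ℝ) :
    kernelMatrix (fun τ => (tent s τ : 𝕜)) t = gram 𝕜 (fun i => indicatorIco 𝕜 (t i) s) := by
  ext i j
  rw [gram_apply, inner_indicatorIco, kernelMatrix, of_apply, tent, min_add_add_right,
    ← max_sub_min_eq_abs']
  ring_nf

lemma linearIndependent_indicatorIco [Fintype ι] {s : ℝ} (hs : 0 < s) {t : ι → ℝ}
    (ht : Function.Injective t) : LinearIndependent 𝕜 (fun i => indicatorIco 𝕜 (t i) s) := by
  classical
  rw [Fintype.linearIndependent_iff]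
  intro g hg
  by_contra! hne
  set S := univ.filter (g · ≠ 0)
  obtain ⟨i₀, hi₀, hmin⟩ := S.exists_min_image t (by simpa [S, Finset.Nonempty] using hne)
  -- `[t i₀, t i₀ + ε)` lies in the support of the `i₀`-th indicator and of no other one in `S`
  set ε := (insert s ((S.erase i₀).image fun j => t j - t i₀)).min' (insert_nonempty _ _)
  have hε : 0 < ε := by
    refine (Finset.lt_min'_iff _ _).2 fun y hy => ?_
    simp only [Finset.mem_insert, Finset.mem_image, Finset.mem_erase] at hy
    obtain rfl | ⟨j, ⟨hj, hjS⟩, rfl⟩ := hy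
    · exact hs
    · exact sub_pos.2 ((hmin j hjS).lt_of_ne fun h => hj (ht h).symm)
  have hεs : ε ≤ s := min'_le _ _ (Finset.mem_insert_self _ _)
  have hεt : ∀ j ∈ S, j ≠ i₀ → t i₀ + ε ≤ t j := fun j hj hji =>
    le_sub_iff_add_le'.1 (min'_le _ _ (Finset.mem_insert_of_mem
      (Finset.mem_image_of_mem _ (Finset.mem_erase.2 ⟨hji, hj⟩))))
  have key : ⟪indicatorIco 𝕜 (t i₀) ε, ∑ j, g j • indicatorIco 𝕜 (t j) s⟫_𝕜 = g i₀ * ε := by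
    rw [inner_sum, Finset.sum_eq_single i₀]
    · rw [inner_smul_right, inner_indicatorIco, min_eq_left (by linarith), max_self,
        add_sub_cancel_left, max_eq_left hε.le]
    · intro j _ hji
      by_cases hj : j ∈ S
      · rw [inner_smul_right, inner_indicatorIco, max_eq_right, RCLike.ofReal_zero, mul_zero]
        linarith [hεt j hj hji, min_le_left (t i₀ + ε) (t j + s), le_max_right (t i₀) (t j)]
      · rw [show g j = 0 by simpa [S] using hj, zero_smul, inner_zero_right]
    · simp
  rw [hg, inner_zero_right] at key
  exact (mem_filter.1 hi₀).2 (by simpa [hε.ne'] using key.symm)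

theorem posSemidef_kernelMatrix_tent [Finite ι] (s : ℝ) (t : ι → ℝ) :
    (kernelMatrix (fun τ => (tent s τ : 𝕜)) t).PosSemidef := by
  rw [kernelMatrix_tent_eq_gram]
  exact posSemidef_gram 𝕜 _

theorem posDef_kernelMatrix_tent [Fintype ι] {s : ℝ} (hs : 0 < s) {t : ι → ℝ}
    (ht : Function.Injective t) : (kernelMatrix (fun τ => (tent s τ : 𝕜)) t).PosDef := by
  rw [kernelMatrix_tent_eq_gram]
  exact posDef_gram_of_linearIndependent (linearIndependent_indicatorIco hs ht)

theorem posSemidef_kernelMatrix_one [Finite ι] (t : ι → ℝ) :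
    (kernelMatrix (fun _ => (1 : 𝕜)) t).PosSemidef := by
  convert posSemidef_vecMulVec_self_star (fun _ : ι => (1 : 𝕜))
  ext
  simp [kernelMatrix, vecMulVec]

end Tent

section Kronecker

variable {R ι n κ : Type*} [Fintype ι] [Fintype n]

lemma sum_star_dotProduct_mulVec_eq_blockKernel [CommSemiring R] [StarRing R]
    (H : ℝ → Matrix n n R) (t : ι → ℝ) (z : ι → n → R) :
    ∑ i, ∑ j, star (z i) ⬝ᵥ H (t i - t j) *ᵥ z j =
      star (Function.uncurry z) ⬝ᵥ blockKernel H t *ᵥ Function.uncurry z := by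
  simp only [dotProduct, mulVec, blockKernel, Fintype.sum_prod_type, Finset.mul_sum, of_apply,
    Pi.star_apply, Function.uncurry_apply_pair]
  exact Finset.sum_congr rfl fun _ _ => Finset.sum_comm

omit [Fintype ι] [Fintype n] in
lemma blockKernel_add_sum_smul [CommSemiring R] (C₀ : Matrix n n R) (φ : κ → ℝ → R)
    (C : κ → Matrix n n R) (S : Finset κ) (t : ι → ℝ) :
    blockKernel (fun τ => C₀ + ∑ k ∈ S, φ k τ • C k) t =
      kernelMatrix (fun _ => 1) t ⊗ₖ C₀ + ∑ k ∈ S, kernelMatrix (φ k) t ⊗ₖ C k := by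
  ext x y
  simp [blockKernel, kernelMatrix, Matrix.sum_apply]

lemma Matrix.mulVec_eq_zero_of_kronecker_mulVec_eq_zero [Field R] [DecidableEq ι]
    [DecidableEq n] {A : Matrix ι ι R} (hA : IsUnit A) {C : Matrix n n R} {x : ι × n → R}
    (h : (A ⊗ₖ C) *ᵥ x = 0) (i : ι) : C *ᵥ (fun p => x (i, p)) = 0 := by
  have h1 : (A ⊗ₖ (1 : Matrix n n R)) *ᵥ (((1 : Matrix ι ι R) ⊗ₖ C) *ᵥ x) =
      (A ⊗ₖ (1 : Matrix n n R)) *ᵥ 0 := by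
    rw [mulVec_mulVec, ← mul_kronecker_mul, mul_one, one_mul, h, mulVec_zero]
  have h2 := mulVec_injective_iff_isUnit.2 (hA.kronecker isUnit_one) h1
  ext p
  simpa [mulVec, dotProduct, Fintype.sum_prod_type, one_apply] using congr_fun h2 (i, p)

lemma Matrix.mulVec_eq_zero_of_le {𝕜 : Type*} [RCLike 𝕜] {A M : Matrix n n 𝕜} (hA : 0 ≤ A)
    (hAM : A ≤ M) {x : n → 𝕜} (hx : star x ⬝ᵥ M *ᵥ x = 0) : A *ᵥ x = 0 := by
  refine (hA.posSemidef.dotProduct_mulVec_zero_iff x).1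
    (le_antisymm ?_ (hA.posSemidef.dotProduct_mulVec_nonneg x))
  have := (Matrix.le_iff.1 hAM).dotProduct_mulVec_nonneg x
  rwa [sub_mulVec, dotProduct_sub, hx, zero_sub, neg_nonneg] at this

variable {𝕜 : Type*} [RCLike 𝕜] (C₀ : Matrix n n 𝕜) (s : κ → ℝ) (C : κ → Matrix n n 𝕜)
  (S : Finset κ) (t : ι → ℝ)

theorem nonneg_blockKernel_add_sum_tent_smul (hC₀ : C₀.PosSemidef)
    (hC : ∀ k ∈ S, (C k).PosSemidef) :
    0 ≤ blockKernel (fun τ => C₀ + ∑ k ∈ S, (tent (s k) τ : 𝕜) • C k) t := by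
  rw [blockKernel_add_sum_smul]
  exact add_nonneg ((posSemidef_kernelMatrix_one t).kronecker hC₀).nonneg
    (sum_nonneg fun k hk => ((posSemidef_kernelMatrix_tent _ t).kronecker (hC k hk)).nonneg)

theorem mulVec_eq_zero_of_dotProduct_blockKernel_add_sum_tent_smul (hC₀ : C₀.PosSemidef)
    (hC : ∀ k ∈ S, 0 < s k ∧ (C k).PosSemidef) (ht : Function.Injective t) {x : ι × n → 𝕜}
    (hx : star x ⬝ᵥ blockKernel (fun τ => C₀ + ∑ k ∈ S, (tent (s k) τ : 𝕜) • C k) t *ᵥ x = 0)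
    {k : κ} (hk : k ∈ S) (i : ι) : C k *ᵥ (fun p => x (i, p)) = 0 := by
  classical
  rw [blockKernel_add_sum_smul] at hx
  have hterm : ∀ k ∈ S, 0 ≤ kernelMatrix (fun τ => (tent (s k) τ : 𝕜)) t ⊗ₖ C k := fun k hk =>
    ((posSemidef_kernelMatrix_tent _ t).kronecker (hC k hk).2).nonneg
  refine mulVec_eq_zero_of_kronecker_mulVec_eq_zero
    (posDef_kernelMatrix_tent (hC k hk).1 ht).isUnit (mulVec_eq_zero_of_le (hterm k hk) ?_ hx) i
  exact (single_le_sum hterm hk).trans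
    (le_add_of_nonneg_left ((posSemidef_kernelMatrix_one t).kronecker hC₀).nonneg)

end Kronecker

section NodeSlope

variable {E : Type*} [AddCommGroup E] [Module ℝ E]

/-- Vanishing from the last node on continues the interpolant as a constant, so the slope jump at
`d m` is nonnegative by monotonicity rather than by convexity. -/
def nodeSlope (d : ℕ → ℝ) (m : ℕ) (f : ℝ → E) (k : ℕ) : E :=
  if k < m then slope f (d k) (d (k + 1)) else 0

theorem eq_add_sum_max_smul_nodeSlope {d : ℕ → ℝ} {m : ℕ} (hd : StrictMonoOn d (Set.Iic m))
    (f : ℝ → E) {l : ℕ} (hl : l ≤ m) :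
    f (d l) = f (d m) + ∑ k ∈ range m,
      max (d (k + 1) - d l) 0 • (nodeSlope d m f (k + 1) - nodeSlope d m f k) := by
  have hmono : ∀ i j, i ≤ j → j ≤ m → d i ≤ d j := fun i j hij hj =>
    hd.monotoneOn (Set.mem_Iic.2 (hij.trans hj)) (Set.mem_Iic.2 hj) hij
  induction hl using Nat.decreasingInduction with
  | self =>
    rw [Finset.sum_eq_zero, add_zero]
    intro k hk
    rw [max_eq_right (sub_nonpos.2 (hmono _ _ (mem_range.1 hk) le_rfl)), zero_smul]
  | of_succ l hl ih =>
    have hstep : ∑ k ∈ range m, max (d (k + 1) - d l) 0 •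
          (nodeSlope d m f (k + 1) - nodeSlope d m f k) -
        ∑ k ∈ range m, max (d (k + 1) - d (l + 1)) 0 •
          (nodeSlope d m f (k + 1) - nodeSlope d m f k) =
        (d (l + 1) - d l) • (nodeSlope d m f m - nodeSlope d m f l) := by
      rw [← Finset.sum_sub_distrib, ← Finset.sum_range_add_sum_Ico _ hl.le, Finset.sum_eq_zero,
        zero_add, ← Finset.sum_Ico_sub _ hl.le, Finset.smul_sum]
      · refine Finset.sum_congr rfl fun k hk => ?_
        obtain ⟨hlk, hkm⟩ := Finset.mem_Ico.1 hk
        have h1 := hmono (l + 1) (k + 1) (by omega) (by omega)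
        have h2 := hd (Set.mem_Iic.2 (by omega)) (Set.mem_Iic.2 hl) (Nat.lt_succ_self l)
        rw [← sub_smul, max_eq_left (by linarith), max_eq_left (by linarith)]
        congr 1
        ring
      · intro k hk
        have := hmono (k + 1) l (mem_range.1 hk) (by omega)
        have := hmono l (l + 1) (by omega) hl
        rw [max_eq_right (by linarith), max_eq_right (by linarith), sub_self]
    have hlast : nodeSlope d m f m = 0 := if_neg (lt_irrefl m)
    have hl' : (d (l + 1) - d l) • nodeSlope d m f l = f (d (l + 1)) - f (d l) := by
      rw [nodeSlope, if_pos hl, sub_smul_slope, vsub_eq_sub]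
    rw [sub_eq_iff_eq_add'.1 hstep, hlast, zero_sub, smul_neg, hl', ← add_assoc, ← ih]
    abel

lemma nodeSlope_le_nodeSlope_succ {g : ℝ → ℝ} (hconv : ConvexOn ℝ (Set.Ici 0) g)
    (hmono : AntitoneOn g (Set.Ici 0)) {d : ℕ → ℝ} {m : ℕ} (hd : StrictMonoOn d (Set.Iic m))
    (hd0 : 0 ≤ d 0) {k : ℕ} (hk : k < m) : nodeSlope d m g k ≤ nodeSlope d m g (k + 1) := by
  have hnn : ∀ j ≤ m, d j ∈ Set.Ici 0 := fun j hj =>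
    hd0.trans (hd.monotoneOn (Set.mem_Iic.2 (Nat.zero_le _)) (Set.mem_Iic.2 hj) (Nat.zero_le _))
  have hlt : ∀ j < m, d j < d (j + 1) := fun j hj =>
    hd (Set.mem_Iic.2 hj.le) (Set.mem_Iic.2 hj) (Nat.lt_succ_self j)
  rw [nodeSlope, nodeSlope, if_pos hk]
  split_ifs with hk'
  · simpa only [slope_def_field] using hconv.slope_mono_adjacent (hnn k hk.le) (hnn (k + 2) hk')
      (hlt k hk) (hlt (k + 1) hk')
  · rw [slope_def_field]
    exact div_nonpos_of_nonpos_of_nonneg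
      (sub_nonpos.2 (hmono (hnn k hk.le) (hnn (k + 1) hk) (hlt k hk).le)) (sub_nonneg.2 (hlt k hk).le)

end NodeSlope

section Decomposition

variable {n : Type*} [Fintype n]

lemma dotProduct_nodeSlope_mulVec (d : ℕ → ℝ) (m : ℕ) (G : ℝ → Matrix n n ℝ) (x : n → ℝ)
    (k : ℕ) : x ⬝ᵥ nodeSlope d m G k *ᵥ x = nodeSlope d m (fun r => x ⬝ᵥ G r *ᵥ x) k := by
  unfold nodeSlope
  split_ifs
  · simp only [slope_def_module, smul_mulVec, sub_mulVec, dotProduct_smul, dotProduct_sub]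
  · simp

omit [Fintype n] in
lemma isHermitian_nodeSlope {d : ℕ → ℝ} {m : ℕ} {G : ℝ → Matrix n n ℝ}
    (hG : ∀ l ≤ m, (G (d l)).IsHermitian) (k : ℕ) : (nodeSlope d m G k).IsHermitian := by
  unfold nodeSlope
  split_ifs with hk
  · exact ((hG _ hk).sub (hG _ hk.le)).smul rfl
  · exact isHermitian_zero

open Fin.NatCast in
lemma Finset.exists_strictMonoOn_enum {α : Type*} [LinearOrder α] (D : Finset α)
    (hD : D.Nonempty) :
    ∃ (m : ℕ) (d : ℕ → α), StrictMonoOn d (Set.Iic m) ∧ ∀ r, r ∈ D ↔ ∃ l ≤ m, d l = r := by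
  obtain ⟨m, hm⟩ : ∃ m, D.card = m + 1 := ⟨D.card - 1, by have := hD.card_pos; omega⟩
  refine ⟨m, fun l => D.orderEmbOfFin hm (l : Fin (m + 1)), fun a ha b hb hab =>
    (D.orderEmbOfFin hm).strictMono ((Fin.natCast_lt_natCast ha hb).2 hab), fun r => ?_⟩
  rw [← Finset.mem_coe, ← D.range_orderEmbOfFin hm]
  constructor
  · rintro ⟨i, rfl⟩
    exact ⟨i, Nat.lt_succ_iff.1 i.2, by simp only [Fin.cast_val_eq_self]⟩
  · rintro ⟨l, -, rfl⟩
    exact ⟨l, rfl⟩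

theorem exists_tent_decomposition (G : ℝ → Matrix n n ℝ)
    (hpsd : ∀ r, 0 ≤ r → (G r).PosSemidef)
    (hmono : ∀ x, AntitoneOn (fun r => x ⬝ᵥ G r *ᵥ x) (Set.Ici 0))
    (hconv : ∀ x, ConvexOn ℝ (Set.Ici 0) (fun r => x ⬝ᵥ G r *ᵥ x))
    (D : Finset ℝ) (hD : ∀ r ∈ D, 0 ≤ r) :
    ∃ (C₀ : Matrix n n ℝ) (m : ℕ) (s : ℕ → ℝ) (C : ℕ → Matrix n n ℝ), C₀.PosSemidef ∧
      (∀ k ∈ range m, 0 < s k ∧ (C k).PosSemidef) ∧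
      ∀ r ∈ D, G r = C₀ + ∑ k ∈ range m, tent (s k) r • C k := by
  rcases D.eq_empty_or_nonempty with rfl | hne
  · exact ⟨0, 0, 0, 0, PosSemidef.zero, by simp, by simp⟩
  obtain ⟨m, d, hd, hDd⟩ := D.exists_strictMonoOn_enum hne
  have hd0 : ∀ l ≤ m, 0 ≤ d l := fun l hl => hD _ ((hDd _).2 ⟨l, hl, rfl⟩)
  refine ⟨G (d m), m, fun k => d (k + 1),
    fun k => nodeSlope d m G (k + 1) - nodeSlope d m G k, hpsd _ (hd0 m le_rfl),
    fun k hk => ⟨?_, ?_⟩, fun r hr => ?_⟩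
  · exact (hd0 0 (Nat.zero_le _)).trans_lt
      (hd (Set.mem_Iic.2 (Nat.zero_le _)) (Set.mem_Iic.2 (mem_range.1 hk)) (Nat.succ_pos k))
  · have hherm := isHermitian_nodeSlope fun l hl => (hpsd _ (hd0 l hl)).isHermitian
    refine .of_dotProduct_mulVec_nonneg ((hherm _).sub (hherm _)) fun x => ?_
    rw [star_trivial, sub_mulVec, dotProduct_sub, dotProduct_nodeSlope_mulVec,
      dotProduct_nodeSlope_mulVec, sub_nonneg]
    exact nodeSlope_le_nodeSlope_succ (hconv x) (hmono x) hd (hd0 0 (Nat.zero_le _))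
      (mem_range.1 hk)
  · obtain ⟨l, hl, rfl⟩ := (hDd r).1 hr
    rw [eq_add_sum_max_smul_nodeSlope hd G hl]
    simp only [tent, abs_of_nonneg (hd0 l hl)]

end Decomposition

theorem posDef_blockKernel_abs {ι n : Type*} [Fintype ι] [Fintype n] (G : ℝ → Matrix n n ℝ)
    (hpsd : ∀ r, 0 ≤ r → (G r).PosSemidef)
    (hmono : ∀ x, AntitoneOn (fun r => x ⬝ᵥ G r *ᵥ x) (Set.Ici 0))
    (hconv : ∀ x, ConvexOn ℝ (Set.Ici 0) (fun r => x ⬝ᵥ G r *ᵥ x))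
    (hG : ∀ x : n → ℝ, x ≠ 0 → ∃ u v, 0 ≤ u ∧ 0 ≤ v ∧ x ⬝ᵥ G u *ᵥ x ≠ x ⬝ᵥ G v *ᵥ x)
    {t : ι → ℝ} (ht : Function.Injective t) : (blockKernel (fun τ => G |τ|) t).PosDef := by
  refine .of_dotProduct_mulVec_pos ?_ fun x hx => ?_
  · ext y z
    simpa [blockKernel, abs_sub_comm] using
      congr_fun₂ (hpsd _ (abs_nonneg (t y.1 - t z.1))).isHermitian y.2 z.2
  obtain ⟨i, hi⟩ : ∃ i, (fun p => x (i, p)) ≠ 0 := by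
    by_contra! h
    exact hx (funext fun y => congr_fun (h y.1) y.2)
  obtain ⟨u, v, hu, hv, huv⟩ := hG _ hi
  obtain ⟨C₀, m, s, C, hC₀, hC, hGD⟩ := exists_tent_decomposition G hpsd hmono hconv
    (insert u (insert v (univ.image fun p : ι × ι => |t p.1 - t p.2|))) (by aesop)
  have hM : blockKernel (fun τ => G |τ|) t =
      blockKernel (fun τ => C₀ + ∑ k ∈ range m, tent (s k) τ • C k) t := by
    ext y z
    simp [blockKernel, hGD _ (by simp : |t y.1 - t z.1| ∈ _), tent_abs]
  rw [hM]
  refine lt_of_le_of_ne ((nonneg_blockKernel_add_sum_tent_smul C₀ s C _ t hC₀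
    fun k hk => (hC k hk).2).posSemidef.dotProduct_mulVec_nonneg x) fun h0 => huv ?_
  have hsum : ∀ r, (∑ k ∈ range m, tent (s k) r • C k) *ᵥ (fun p => x (i, p)) = 0 := fun r => by
    rw [sum_mulVec]
    refine sum_eq_zero fun k hk => ?_
    rw [smul_mulVec, mulVec_eq_zero_of_dotProduct_blockKernel_add_sum_tent_smul C₀ s C _ t hC₀ hC
      ht h0.symm hk i, smul_zero]
  rw [hGD u (by simp), hGD v (by simp), add_mulVec, add_mulVec, hsum, hsum]

end

lemma Matrix.PosDef.map_ofReal {n : Type*} [Fintype n] [DecidableEq n] {M : Matrix n n ℝ}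
    (hM : M.PosDef) : (M.map Complex.ofReal).PosDef := by
  change (Complex.ofRealHom.mapMatrix M).PosDef
  have hpsd : (Complex.ofRealHom.mapMatrix M).PosSemidef := by
    obtain ⟨B, rfl⟩ := CStarAlgebra.nonneg_iff_eq_star_mul_self.mp hM.posSemidef.nonneg
    rw [map_mul, star_eq_conjTranspose, RingHom.mapMatrix_apply, RingHom.mapMatrix_apply,
      conjTranspose_map _ fun x => by simp]
    exact posSemidef_conjTranspose_mul_self _
  rw [hpsd.posDef_iff_det_ne_zero, ← RingHom.map_det]
  exact Complex.ofReal_ne_zero.2 hM.det_pos.ne'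

lemma star_dotProduct_map_ofReal_mulVec {n : Type*} [Fintype n] (M : Matrix n n ℝ) (x : n → ℝ) :
    star (fun p => (x p : ℂ)) ⬝ᵥ M.map Complex.ofReal *ᵥ (fun p => (x p : ℂ)) =
      ((x ⬝ᵥ M *ᵥ x : ℝ) : ℂ) := by
  simp [dotProduct, mulVec]

lemma isStrictPosDefMatrixFun_of_posDef_blockKernel {K : ℕ} {H : ℝ → Matrix (Fin K) (Fin K) ℂ}
    (hH : ∀ (N : ℕ) (t : Fin N → ℝ), Function.Injective t → (blockKernel H t).PosDef) :
    IsStrictPosDefMatrixFun H := by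
  intro N t z ht
  rw [sum_star_dotProduct_mulVec_eq_blockKernel]
  refine ⟨(hH N t ht).posSemidef.dotProduct_mulVec_nonneg _, fun h0 i => funext fun p => ?_⟩
  by_contra hne
  exact ((hH N t ht).dotProduct_mulVec_pos fun h => hne (congr_fun h (i, p))).ne' h0

lemma IsStrictPosDefMatrixFun.eq_zero_of_dotProduct_mulVec_eq {K : ℕ}
    {G : ℝ → Matrix (Fin K) (Fin K) ℝ}
    (hG : IsStrictPosDefMatrixFun fun τ => (G |τ|).map Complex.ofReal) {x : Fin K → ℝ}
    (hx : x ⬝ᵥ G 0 *ᵥ x = x ⬝ᵥ G 1 *ᵥ x) : x = 0 := by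
  set y : Fin K → ℂ := fun p => x p
  have hinj : Function.Injective ![(0 : ℝ), 1] := by
    intro a b h; fin_cases a <;> fin_cases b <;> simp_all
  have hy := (hG 2 ![0, 1] ![y, -y] hinj).2 (by
    simp [Fin.sum_univ_two, y, mulVec_neg, star_dotProduct_map_ofReal_mulVec, hx]) 0
  funext p
  simpa [y] using congr_fun hy p

theorem convex_kernel_strictPosDef_iff {K : ℕ}
    (G : ℝ → Matrix (Fin K) (Fin K) ℝ)
    (hsym : ∀ t : ℝ, 0 ≤ t → (G t)ᵀ = G t)
    (hnonneg : ∀ t : ℝ, 0 ≤ t → ∀ x : Fin K → ℝ, 0 ≤ x ⬝ᵥ (G t) *ᵥ x)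
    (hmono : ∀ x : Fin K → ℝ, ∀ s t : ℝ, 0 ≤ s → s ≤ t →
      x ⬝ᵥ (G t) *ᵥ x ≤ x ⬝ᵥ (G s) *ᵥ x)
    (hconv : ∀ x : Fin K → ℝ, ConvexOn ℝ (Set.Ici (0 : ℝ)) (fun t => x ⬝ᵥ (G t) *ᵥ x)) :
    IsStrictPosDefMatrixFun (fun t => (G |t|).map Complex.ofReal) ↔
      ∀ x : Fin K → ℝ, x ≠ 0 →
        ∃ s t : ℝ, 0 ≤ s ∧ 0 ≤ t ∧ x ⬝ᵥ (G s) *ᵥ x ≠ x ⬝ᵥ (G t) *ᵥ x := by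
  constructor
  · intro hG x hx
    by_contra! hconst
    exact hx (hG.eq_zero_of_dotProduct_mulVec_eq (hconst 0 1 le_rfl zero_le_one))
  · intro hnc
    have hpsd : ∀ r, 0 ≤ r → (G r).PosSemidef := fun r hr =>
      .of_dotProduct_mulVec_nonneg (isHermitian_iff_isSymm.2 (hsym r hr))
        fun x => by simpa using hnonneg r hr x
    refine isStrictPosDefMatrixFun_of_posDef_blockKernel fun N t ht => ?_
    exact (posDef_blockKernel_abs G hpsd (fun x a ha b _ hab => hmono x a b ha hab) hconv hnc
      ht).map_ofReal
end

section
/- Let ρ, κ, κ̃ > 0 and define the 2×2 kernel G(t) with diagonal entries exp(−κt) and off-diagonal entries ρ·exp(−κ̃t). Then G is nonincreasing (t ↦ x^⊤G(t)x nonincreasing for all x ∈ ℝ²) if and only if ρ ≤ κ/κ̃ ≤ 1; and G is convex (t ↦ x^⊤G(t)x convex for all x) if and only if ρ ≤ κ²/κ̃² ≤ 1. -/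
/-!
For `x ∈ ℝ²`, `xᵀ G(t) x = (x₀² + x₁²) e^{-κt} + 2ρ x₀x₁ e^{-κ't}`. Being nonincreasing (convex)
on `[0, ∞)` means that minus the first (the second) derivative is nonnegative there, i.e.
`κⁿ (x₀² + x₁²) e^{-κt} + κ'ⁿ 2ρ x₀x₁ e^{-κ't} ≥ 0` with `n = 1` (`n = 2`). Since
`2x₀x₁ ≥ -(x₀² + x₁²)` with equality at `x = (1, -1)`, this holds for all `x` iff
`ρ κ'ⁿ e^{-κ't} ≤ κⁿ e^{-κt}` for all `t ≥ 0`, i.e. iff `ρ κ'ⁿ ≤ κⁿ` (at `t = 0`) and `κ ≤ κ'`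
(as `t → ∞`).
-/

open Matrix Real Set

noncomputable def expCombo (a b k l t : ℝ) : ℝ := a * exp (-k * t) + b * exp (-l * t)

namespace expCombo

variable {a b k l : ℝ}

theorem hasDerivAt (t : ℝ) :
    HasDerivAt (expCombo a b k l) (-expCombo (k * a) (l * b) k l t) t := by
  have hk := ((hasDerivAt_id t).const_mul (-k)).exp.const_mul a
  have hl := ((hasDerivAt_id t).const_mul (-l)).exp.const_mul b
  exact (hk.add hl).congr_deriv (by simp only [expCombo, id]; ring)

theorem deriv_eq : deriv (expCombo a b k l) = fun t => -expCombo (k * a) (l * b) k l t :=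
  funext fun t => (hasDerivAt t).deriv

theorem continuous : Continuous (expCombo a b k l) := by
  unfold expCombo
  fun_prop

theorem antitoneOn_Ici_iff :
    AntitoneOn (expCombo a b k l) (Ici 0) ↔ ∀ t, 0 ≤ t → 0 ≤ expCombo (k * a) (l * b) k l t := by
  constructor
  · intro h t ht
    have := h.derivWithin_nonpos (x := t)
    rwa [(hasDerivAt t).hasDerivWithinAt.derivWithin (uniqueDiffOn_Ici 0 t ht), neg_nonpos] at this
  · intro h
    refine antitoneOn_of_deriv_nonpos (convex_Ici 0) continuous.continuousOn
      (fun t _ => (hasDerivAt t).differentiableAt.differentiableWithinAt) fun t ht => ?_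
    rw [interior_Ici] at ht
    simpa [deriv_eq] using h t (le_of_lt ht)

theorem convexOn_Ici_iff :
    ConvexOn ℝ (Ici 0) (expCombo a b k l) ↔
      ∀ t, 0 ≤ t → 0 ≤ expCombo (k ^ 2 * a) (l ^ 2 * b) k l t := by
  have hd : ∀ t, DifferentiableAt ℝ (expCombo a b k l) t := fun t =>
    (hasDerivAt t).differentiableAt
  suffices ConvexOn ℝ (Ici 0) (expCombo a b k l) ↔
      AntitoneOn (expCombo (k * a) (l * b) k l) (Ici 0) by
    simp only [this, antitoneOn_Ici_iff, ← mul_assoc, ← sq]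
  constructor
  · intro h
    simpa [deriv_eq] using (h.monotoneOn_deriv fun t _ => hd t).neg
  · intro h
    refine MonotoneOn.convexOn_of_deriv (convex_Ici 0) continuous.continuousOn
      (fun t _ => (hd t).differentiableWithinAt) ?_
    rw [deriv_eq, interior_Ici]
    exact h.neg.mono Ioi_subset_Ici_self

end expCombo

theorem forall_mul_exp_le_mul_exp_iff {A B k l : ℝ} (hB : 0 < B) :
    (∀ t, 0 ≤ t → B * exp (-l * t) ≤ A * exp (-k * t)) ↔ B ≤ A ∧ k ≤ l := by
  constructor
  · intro h
    have hBA : B ≤ A := by simpa using h 0 le_rfl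
    refine ⟨hBA, le_of_not_gt fun hlk => ?_⟩
    -- at `t = A / (B (k - l))` the bound `exp ((k - l) t) ≥ 1 + (k - l) t` already exceeds `A / B`
    set t := A / (B * (k - l))
    have ht : 0 ≤ t := div_nonneg (hB.le.trans hBA) (mul_nonneg hB.le (sub_nonneg.2 hlk.le))
    have hexp : B * exp ((k - l) * t) ≤ A := by
      have hsplit : exp (-l * t) = exp ((k - l) * t) * exp (-k * t) := by
        rw [← exp_add]; ring_nf
      have := h t ht
      rw [hsplit, ← mul_assoc] at this
      exact le_of_mul_le_mul_right this (exp_pos _)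
    have hlin : B * ((k - l) * t + 1) = A + B := by
      simp only [t]
      field_simp
    nlinarith [add_one_le_exp ((k - l) * t)]
  · rintro ⟨hBA, hkl⟩ t ht
    exact mul_le_mul hBA (exp_le_exp.2 (by nlinarith)) (exp_pos _).le (hB.le.trans hBA)

theorem forall_expCombo_quadratic_nonneg_iff {ρ p q k l : ℝ} (hρ : 0 < ρ) (hq : 0 < q) :
    (∀ x : Fin 2 → ℝ, ∀ t, 0 ≤ t →
      0 ≤ expCombo (p * (x 0 ^ 2 + x 1 ^ 2)) (q * (2 * ρ * (x 0 * x 1))) k l t) ↔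
      ρ * q ≤ p ∧ k ≤ l := by
  rw [← forall_mul_exp_le_mul_exp_iff (mul_pos hρ hq)]
  constructor
  · intro h t ht
    have h₁ := h ![1, -1] t ht
    norm_num [expCombo] at h₁
    simp only [neg_mul]
    linarith
  · intro h x t ht
    have hcross : -(ρ * (x 0 ^ 2 + x 1 ^ 2)) ≤ 2 * ρ * (x 0 * x 1) := by
      nlinarith [sq_nonneg (x 0 + x 1)]
    simp only [expCombo]
    nlinarith [mul_le_mul_of_nonneg_left (h t ht) (by positivity : 0 ≤ x 0 ^ 2 + x 1 ^ 2),
      mul_le_mul_of_nonneg_left hcross (by positivity : 0 ≤ q * exp (-l * t))]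

theorem exp_kernel_nonincreasing_convex_iff (ρ κ κ' : ℝ)
    (hρ : 0 < ρ) (hκ : 0 < κ) (hκ' : 0 < κ')
    (G : ℝ → Matrix (Fin 2) (Fin 2) ℝ)
    (hG : ∀ t : ℝ, G t =
      !![Real.exp (-κ * t), ρ * Real.exp (-κ' * t);
         ρ * Real.exp (-κ' * t), Real.exp (-κ * t)]) :
    ((∀ x : Fin 2 → ℝ, AntitoneOn (fun t => x ⬝ᵥ (G t) *ᵥ x) (Set.Ici (0 : ℝ))) ↔
        (ρ ≤ κ / κ' ∧ κ / κ' ≤ 1)) ∧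
      ((∀ x : Fin 2 → ℝ, ConvexOn ℝ (Set.Ici (0 : ℝ)) (fun t => x ⬝ᵥ (G t) *ᵥ x)) ↔
        (ρ ≤ κ ^ 2 / κ' ^ 2 ∧ κ ^ 2 / κ' ^ 2 ≤ 1)) := by
  have hform : ∀ x : Fin 2 → ℝ, (fun t => x ⬝ᵥ (G t) *ᵥ x) =
      expCombo (x 0 ^ 2 + x 1 ^ 2) (2 * ρ * (x 0 * x 1)) κ κ' := by
    intro x
    funext t
    simp only [dotProduct, mulVec, hG, of_apply, cons_val', cons_val_fin_one, Fin.sum_univ_two,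
      cons_val_zero, cons_val_one, expCombo]
    ring
  have hκ'2 : 0 < κ' ^ 2 := by positivity
  simp only [hform, expCombo.antitoneOn_Ici_iff, expCombo.convexOn_Ici_iff,
    forall_expCombo_quadratic_nonneg_iff hρ hκ', forall_expCombo_quadratic_nonneg_iff hρ hκ'2]
  rw [le_div_iff₀ hκ', div_le_one hκ', le_div_iff₀ hκ'2, div_le_one hκ'2,
    sq_le_sq₀ hκ.le hκ'.le]
  exact ⟨Iff.rfl, Iff.rfl⟩
end
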